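/- arXiv:1811.05878 — 2 statements merged into one kernel-verified Lean document; each statement's English description precedes it below -/
import Mathlib

section
/- Cut-off frequencies of the coupled transverse branches: let μ_e, μ_c, μ_micro, ᾱ₂, ρ, ζ₀, ω be real numbers with ζ₀ ≠ 0, set ω_s² = 2(μ_e + μ_micro)/ζ₀ and c_s² = (μ_e + μ_c)/ρ, and let A₂(k, ω) be the complex 3×3 matrix with rows (−ω² + c_s²k², 2ikμ_e/ρ, −2ikμ_c/ρ), (−2ikμ_e/ζ₀, −2ω² + k²ᾱ₂/ζ₀ + 2ω_s², k²ᾱ₂/ζ₀), (2ikμ_c/ζ₀, k²ᾱ₂/ζ₀, −2ω² + k²ᾱ₂/ζ₀ + 4μ_c/ζ₀). Then det A₂(0, ω) = 0 if and only if ω = 0 or ω² = 2(μ_e + μ_micro)/ζ₀ or ω² = 2μ_c/ζ₀. -/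
open Matrix

theorem Matrix.det_diagonal_ofReal_eq_zero_iff {ι : Type*} [Fintype ι] [DecidableEq ι]
    (d : ι → ℝ) : (diagonal fun i => (d i : ℂ)).det = 0 ↔ ∃ i, d i = 0 := by
  rw [det_diagonal, ← Complex.ofReal_prod, Complex.ofReal_eq_zero, Finset.prod_eq_zero_iff]
  simp only [Finset.mem_univ, true_and]

theorem stmt_14_general (μe μc μm a₂ ρ ζ₀ ω : ℝ)
    (ωs2 cs2 : ℝ) (hωs2 : ωs2 = 2 * (μe + μm) / ζ₀)
    (A₂ : ℝ → ℝ → Matrix (Fin 3) (Fin 3) ℂ)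
    (hA₂ : ∀ k w : ℝ, A₂ k w =
      !![((-(w ^ 2) + cs2 * k ^ 2 : ℝ) : ℂ), 2 * Complex.I * (k * μe / ρ : ℝ),
           -(2 * Complex.I * (k * μc / ρ : ℝ));
         -(2 * Complex.I * (k * μe / ζ₀ : ℝ)),
           ((-(2 * w ^ 2) + k ^ 2 * a₂ / ζ₀ + 2 * ωs2 : ℝ) : ℂ),
           ((k ^ 2 * a₂ / ζ₀ : ℝ) : ℂ);
         2 * Complex.I * (k * μc / ζ₀ : ℝ), ((k ^ 2 * a₂ / ζ₀ : ℝ) : ℂ),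
           ((-(2 * w ^ 2) + k ^ 2 * a₂ / ζ₀ + 4 * μc / ζ₀ : ℝ) : ℂ)]) :
    (A₂ 0 ω).det = 0 ↔
      ω = 0 ∨ ω ^ 2 = 2 * (μe + μm) / ζ₀ ∨ ω ^ 2 = 2 * μc / ζ₀ := by
  have hdiag : A₂ 0 ω = diagonal fun i =>
      ((![-(ω ^ 2), 2 * (ωs2 - ω ^ 2), 2 * (2 * μc / ζ₀ - ω ^ 2)] i : ℝ) : ℂ) := by
    rw [hA₂]
    ext i j
    fin_cases i <;> fin_cases j <;> simp <;> ring
  rw [hdiag, det_diagonal_ofReal_eq_zero_iff]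
  simp only [Fin.exists_fin_succ, IsEmpty.exists_iff, or_false, cons_val_zero, cons_val_succ,
    neg_eq_zero, pow_eq_zero_iff two_ne_zero, mul_eq_zero, two_ne_zero, false_or, sub_eq_zero,
    hωs2, eq_comm (a := ω ^ 2)]

/-- Cut-off frequencies of the coupled transverse branches: for the coefficient matrix
`A₂(k, ω)` of the transverse plane-wave system, `det A₂(0, ω) = 0` iff `ω = 0` or
`ω² = 2(μ_e + μ_micro)/ζ₀` or `ω² = 2μ_c/ζ₀`. -/
theorem stmt_14 (μe μc μm a₂ ρ ζ₀ ω : ℝ) (hζ : ζ₀ ≠ 0)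
    (ωs2 cs2 : ℝ) (hωs2 : ωs2 = 2 * (μe + μm) / ζ₀) (hcs2 : cs2 = (μe + μc) / ρ)
    (A₂ : ℝ → ℝ → Matrix (Fin 3) (Fin 3) ℂ)
    (hA₂ : ∀ k w : ℝ, A₂ k w =
      !![((-(w ^ 2) + cs2 * k ^ 2 : ℝ) : ℂ), 2 * Complex.I * (k * μe / ρ : ℝ),
           -(2 * Complex.I * (k * μc / ρ : ℝ));
         -(2 * Complex.I * (k * μe / ζ₀ : ℝ)),
           ((-(2 * w ^ 2) + k ^ 2 * a₂ / ζ₀ + 2 * ωs2 : ℝ) : ℂ),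
           ((k ^ 2 * a₂ / ζ₀ : ℝ) : ℂ);
         2 * Complex.I * (k * μc / ζ₀ : ℝ), ((k ^ 2 * a₂ / ζ₀ : ℝ) : ℂ),
           ((-(2 * w ^ 2) + k ^ 2 * a₂ / ζ₀ + 4 * μc / ζ₀ : ℝ) : ℂ)]) :
    (A₂ 0 ω).det = 0 ↔
      ω = 0 ∨ ω ^ 2 = 2 * (μe + μm) / ζ₀ ∨ ω ^ 2 = 2 * μc / ζ₀ :=
  stmt_14_general μe μc μm a₂ ρ ζ₀ ω ωs2 cs2 hωs2 A₂ hA₂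
end

section
/- Cut-off frequencies of the coupled longitudinal-thermal branches: let μ_e, λ_e, μ_micro, λ_micro, μ_c, ρ, ζ₀, θ₀, C₀, C₁, C₂ be real numbers with ζ₀ ≠ 0, set ω_s² = 2(μ_e + μ_micro)/ζ₀ and ω_p² = (2(μ_e + μ_micro) + 3(λ_e + λ_micro))/ζ₀, and let M(ω) be the complex 5×5 matrix with entries M₁₁ = ω², M₂₂ = ω² − ω_s², M₃₃ = ω² − ω_p², M₃₅ = (C₂ − C₁)/ζ₀, M₄₄ = ω² − 2μ_c/ζ₀, M₅₃ = −3iω(C₂ − C₁)θ₀, M₅₅ = −iρC₀ω, and all other entries zero. Then det M(ω) = 0 if and only if ω = 0, or ω² = ω_s², or ω² = 2μ_c/ζ₀, or ρC₀(ω² − ω_p²) = 3θ₀(C₂ − C₁)²/ζ₀. -/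
open Matrix

theorem Matrix.det_fin_five_of_diag_and_block {R : Type*} [CommRing R] (a b c d e f g : R) :
    det !![a, 0, 0, 0, 0;
           0, b, 0, 0, 0;
           0, 0, c, 0, f;
           0, 0, 0, d, 0;
           0, 0, g, 0, e] = a * b * d * (c * e - f * g) := by
  simp [det_succ_row_zero, Fin.sum_univ_succ]
  ring

theorem stmt_15_general (μc ρ ζ₀ θ₀ C₀ C₁ C₂ : ℝ)
    (ωs2 ωp2 : ℝ)
    (ω : ℝ) (M : Matrix (Fin 5) (Fin 5) ℂ)
    (hM : M = !![((ω ^ 2 : ℝ) : ℂ), 0, 0, 0, 0;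
                 0, ((ω ^ 2 - ωs2 : ℝ) : ℂ), 0, 0, 0;
                 0, 0, ((ω ^ 2 - ωp2 : ℝ) : ℂ), 0, (((C₂ - C₁) / ζ₀ : ℝ) : ℂ);
                 0, 0, 0, ((ω ^ 2 - 2 * μc / ζ₀ : ℝ) : ℂ), 0;
                 0, 0, -(3 * Complex.I * (ω * (C₂ - C₁) * θ₀ : ℝ)), 0,
                   -(Complex.I * (ρ * C₀ * ω : ℝ))]) :
    M.det = 0 ↔
      ω = 0 ∨ ω ^ 2 = ωs2 ∨ ω ^ 2 = 2 * μc / ζ₀ ∨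
        ρ * C₀ * (ω ^ 2 - ωp2) = 3 * θ₀ * (C₂ - C₁) ^ 2 / ζ₀ := by
  have hdet : M.det = -Complex.I * ((ω ^ 3 * ((ω ^ 2 - ωs2) * ((ω ^ 2 - 2 * μc / ζ₀) *
      (ρ * C₀ * (ω ^ 2 - ωp2) - 3 * θ₀ * (C₂ - C₁) ^ 2 / ζ₀))) : ℝ) : ℂ) := by
    rw [hM, det_fin_five_of_diag_and_block]
    push_cast
    ring
  simp only [hdet, mul_eq_zero, neg_eq_zero, Complex.I_ne_zero, Complex.ofReal_eq_zero,
    false_or, pow_eq_zero_iff three_ne_zero, sub_eq_zero]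

/-- Cut-off frequencies of the coupled longitudinal-thermal branches: for the matrix
`M(ω)` of the longitudinal-thermal plane-wave system at wavenumber `k = 0`,
`det M(ω) = 0` iff `ω = 0`, or `ω² = ω_s²`, or `ω² = 2μ_c/ζ₀`, or
`ρC₀(ω² - ω_p²) = 3θ₀(C₂ - C₁)²/ζ₀`. -/
theorem stmt_15 (μe lamE μm lamM μc ρ ζ₀ θ₀ C₀ C₁ C₂ : ℝ) (hζ : ζ₀ ≠ 0)
    (ωs2 ωp2 : ℝ) (hωs2 : ωs2 = 2 * (μe + μm) / ζ₀)
    (hωp2 : ωp2 = (2 * (μe + μm) + 3 * (lamE + lamM)) / ζ₀)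
    (ω : ℝ) (M : Matrix (Fin 5) (Fin 5) ℂ)
    (hM : M = !![((ω ^ 2 : ℝ) : ℂ), 0, 0, 0, 0;
                 0, ((ω ^ 2 - ωs2 : ℝ) : ℂ), 0, 0, 0;
                 0, 0, ((ω ^ 2 - ωp2 : ℝ) : ℂ), 0, (((C₂ - C₁) / ζ₀ : ℝ) : ℂ);
                 0, 0, 0, ((ω ^ 2 - 2 * μc / ζ₀ : ℝ) : ℂ), 0;
                 0, 0, -(3 * Complex.I * (ω * (C₂ - C₁) * θ₀ : ℝ)), 0,
                   -(Complex.I * (ρ * C₀ * ω : ℝ))]) :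
    M.det = 0 ↔
      ω = 0 ∨ ω ^ 2 = ωs2 ∨ ω ^ 2 = 2 * μc / ζ₀ ∨
        ρ * C₀ * (ω ^ 2 - ωp2) = 3 * θ₀ * (C₂ - C₁) ^ 2 / ζ₀ :=
  stmt_15_general μc ρ ζ₀ θ₀ C₀ C₁ C₂ ωs2 ωp2 ω M hM
end
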